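/- Every sequential Hausdorff topological space which is extremally disconnected is discrete. -/
import Mathlib

open Filter Topology Set

private lemma ed_disj_closure {X : Type*} [TopologicalSpace X] [ExtremallyDisconnected X]
    {U V : Set X} (hU : IsOpen U) (hV : IsOpen V) (h : Disjoint U V) :
    Disjoint (closure U) (closure V) :=
  (h.closure_left hV).closure_right (ExtremallyDisconnected.open_closure U hU)

private lemma ed_sep {X : Type*} [TopologicalSpace X] [T2Space X] [ExtremallyDisconnected X]
    {a x : X} (h : a ≠ x) : ∃ C : Set X, IsClopen C ∧ a ∈ C ∧ x ∉ C := by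
  obtain ⟨U, V, hU, hV, haU, hxV, hd⟩ := t2_separation h
  refine ⟨closure U, ⟨isClosed_closure, ExtremallyDisconnected.open_closure U hU⟩,
    subset_closure haU, fun hx => ?_⟩
  exact Set.disjoint_left.mp (hd.closure_left hV) hx hxV

private lemma ed_no_conv {X : Type*} [TopologicalSpace X] [T2Space X]
    [ExtremallyDisconnected X] {v : ℕ → X} {x : X}
    (hv : Tendsto v atTop (𝓝 x)) (hne : ∀ n, v n ≠ x) : False := by
  classical
  -- state: (index, current clopen piece, cumulative union)
  set Good : ℕ × Set X × Set X → Prop := fun s =>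
    IsClopen s.2.1 ∧ IsClopen s.2.2 ∧ x ∉ s.2.2 ∧ v s.1 ∈ s.2.1 ∧ s.2.1 ⊆ s.2.2 with hGoodDef
  have step : ∀ s : {s // Good s}, ∃ t : {t // Good t},
      s.1.1 < t.1.1 ∧ Disjoint t.1.2.1 s.1.2.2 ∧ t.1.2.2 = s.1.2.2 ∪ t.1.2.1 := by
    rintro ⟨⟨k, C, U⟩, hC, hU, hxU, hvk, hCU⟩
    have hUc : IsOpen Uᶜ := hU.1.isOpen_compl
    have hev : ∀ᶠ m in atTop, v m ∈ Uᶜ ∧ k < m :=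
      (hv.eventually (hUc.mem_nhds hxU)).and (eventually_gt_atTop k)
    obtain ⟨m, hm1, hm2⟩ := hev.exists
    obtain ⟨D, hD, hvm, hxD⟩ := ed_sep (hne m)
    refine ⟨⟨(m, D ∩ Uᶜ, U ∪ D ∩ Uᶜ),
      hD.inter hU.compl, hU.union (hD.inter hU.compl), ?_, ⟨hvm, hm1⟩,
      Set.subset_union_right⟩, hm2, ?_, rfl⟩
    · rintro (h | h)
      · exact hxU h
      · exact hxD h.1
    · exact disjoint_compl_left.mono_left Set.inter_subset_right
  obtain ⟨D0, hD0, hv0, hx0⟩ := ed_sep (hne 0)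
  have base : Good (0, D0, D0) := ⟨hD0, hD0, hx0, hv0, subset_rfl⟩
  let f : ℕ → {s // Good s} :=
    fun n => Nat.rec ⟨(0, D0, D0), base⟩ (fun _ s => Classical.choose (step s)) n
  have hf : ∀ n, (f n).1.1 < (f (n + 1)).1.1 ∧ Disjoint (f (n + 1)).1.2.1 (f n).1.2.2 ∧
      (f (n + 1)).1.2.2 = (f n).1.2.2 ∪ (f (n + 1)).1.2.1 :=
    fun n => Classical.choose_spec (step (f n))
  set k : ℕ → ℕ := fun n => (f n).1.1 with hk
  set C : ℕ → Set X := fun n => (f n).1.2.1 with hC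
  set U : ℕ → Set X := fun n => (f n).1.2.2 with hU
  have hGood : ∀ n, IsClopen (C n) ∧ IsClopen (U n) ∧ x ∉ U n ∧ v (k n) ∈ C n ∧ C n ⊆ U n :=
    fun n => (f n).2
  have hUmono : ∀ i j, i ≤ j → U i ⊆ U j := by
    intro i j hij
    induction j, hij using Nat.le_induction with
    | base => exact subset_rfl
    | succ j hij ih =>
      refine ih.trans ?_
      rw [show U (j + 1) = U j ∪ C (j + 1) from (hf j).2.2]
      exact Set.subset_union_left
  have hdisjC : ∀ i j, i < j → Disjoint (C i) (C j) := by
    intro i j hij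
    obtain ⟨j, rfl⟩ : ∃ m, j = m + 1 := ⟨j - 1, by omega⟩
    have h1 : Disjoint (C (j + 1)) (U j) := (hf j).2.1
    have h2 : C i ⊆ U j := (hGood i).2.2.2.2.trans (hUmono i j (by omega))
    exact (h1.mono_right h2).symm
  have hkge : ∀ n, n ≤ k n := by
    intro n
    induction n with
    | zero => exact Nat.zero_le _
    | succ n ih => exact Nat.lt_of_le_of_lt ih (hf n).1
  set V : Set X := ⋃ n, C (2 * n) with hV
  set W : Set X := ⋃ n, C (2 * n + 1) with hW
  have hVop : IsOpen V := isOpen_iUnion fun n => (hGood (2 * n)).1.2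
  have hWop : IsOpen W := isOpen_iUnion fun n => (hGood (2 * n + 1)).1.2
  have hVW : Disjoint V W := by
    rw [Set.disjoint_iUnion_left]
    intro n
    rw [Set.disjoint_iUnion_right]
    intro m
    rcases Nat.lt_or_ge (2 * n) (2 * m + 1) with h | h
    · exact hdisjC (2 * n) (2 * m + 1) h
    · exact (hdisjC (2 * m + 1) (2 * n) (by omega)).symm
  have hcl : ∀ (S : Set X) (g : ℕ → ℕ), (∀ n, n ≤ g n) → (∀ n, v (k (g n)) ∈ S) →
      x ∈ closure S := by
    intro S g hg hmem
    rw [mem_closure_iff]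
    intro O hO hxO
    obtain ⟨N, hN⟩ := Filter.eventually_atTop.mp (hv.eventually (hO.mem_nhds hxO))
    exact ⟨v (k (g N)), hN _ ((hg N).trans (hkge _)), hmem N⟩
  have hxV : x ∈ closure V :=
    hcl V (fun n => 2 * n) (fun n => by show n ≤ 2 * n; omega)
      (fun n => Set.mem_iUnion.mpr ⟨n, (hGood (2 * n)).2.2.2.1⟩)
  have hxW : x ∈ closure W :=
    hcl W (fun n => 2 * n + 1) (fun n => by show n ≤ 2 * n + 1; omega)
      (fun n => Set.mem_iUnion.mpr ⟨n, (hGood (2 * n + 1)).2.2.2.1⟩)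
  exact Set.disjoint_left.mp (ed_disj_closure hVop hWop hVW) hxV hxW

/-- Every sequential Hausdorff extremally disconnected space is discrete. -/
theorem discrete_of_sequential_t2_extremallyDisconnected (X : Type*) [TopologicalSpace X]
    [SequentialSpace X] [T2Space X] [ExtremallyDisconnected X] :
    DiscreteTopology X := by
  refine discreteTopology_iff_forall_isClosed.mpr fun s => IsSeqClosed.isClosed ?_
  intro u p hu hup
  by_contra hp
  exact ed_no_conv hup fun n h => hp (h ▸ hu n)
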